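/- The matrix M_s(ν_1,…,ν_s,τ_1,…,τ_s) is a presentation matrix of the ℤ[G]-module 𝓘_I = ker(ℤ[G] → ℤ[G/I]). Precisely: (i) 𝓘_I is generated by τ_1,…,τ_s; (ii) the kernel of the surjective ℤ[G]-linear map ℤ[G]^s → 𝓘_I sending the l-th standard basis vector e_l to τ_l is generated by the elements ν_l·e_l (1 ≤ l ≤ s) together with the elements τ_l·e_{l'} − τ_{l'}·e_l (1 ≤ l < l' ≤ s). -/

import Mathlib

/-!
(i) The kernel of `R[G] → R[G ⧸ H]` is generated by the `h - 1`, `h ∈ H`, and since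
`xy - 1 = x (y - 1) + (x - 1)`, generators of `H` suffice; `I` is generated by the `σ l`.

(ii) Induction on `s`. Let `K = ⟨σ_s⟩`. The map `π : ℤ[G] → ℤ[G ⧸ K]` is onto with kernel
`(τ_s)`; the images of `σ_1, …, σ_{s-1}` are again independent, and `π ν_l` is the norm element
of `⟨σ_l K⟩` because `⟨σ_l⟩ ∩ K = 1`. Given a relation `x`, the first `s - 1` coordinates of `π x`
form a relation in `ℤ[G ⧸ K]`, hence a combination of rows of `M_{s-1}`; these lift to rows of
`M_s`. What remains has its first `s - 1` coordinates in `(τ_s)`, so the Koszul rows `(l, s)`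
reduce it to `c e_s` with `c τ_s = 0`, and the annihilator of `τ_s` is `(ν_s)` because a
`σ_s`-invariant element of `ℤ[G]` is a multiple of `ν_s`.
-/

open MonoidAlgebra Finset

/-- The sum `ν_H = Σ_{σ ∈ H} σ` of the elements of a subgroup `H` in the group algebra. -/
noncomputable def nuElt (R : Type) [CommRing R] {G : Type} [CommGroup G] [Fintype G]
    (H : Subgroup G) : MonoidAlgebra R G :=
  letI := Classical.decPred (· ∈ H)
  ∑ σ ∈ Finset.univ.filter (· ∈ H), MonoidAlgebra.of R G σ

/-- `Fitt_i(A)`: the ideal generated by the `(n-i) × (n-i)` minors of a matrix `A`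
with `n` columns (so `Fitt_i(A) = (1)` for `i ≥ n`, and `(0)` if `A` has fewer than
`n - i` rows). -/
noncomputable def fittMat {R : Type} [CommRing R] {m n : Type} [Fintype m] [Fintype n]
    (A : Matrix m n R) (i : ℕ) : Ideal R :=
  Ideal.span {x : R |
    ∃ (r : Fin (Fintype.card n - i) → m) (c : Fin (Fintype.card n - i) → n),
      x = (A.submatrix r c).det}

/-- The index type for the rows of `N_s`: pairs `l < l'`. -/
abbrev rowPairs (s : ℕ) := {p : Fin s × Fin s // p.1 < p.2}

/-- The matrix `N_s(t_1, …, t_s)`: row `(l, l')` has `-t_{l'}` in column `l`,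
`t_l` in column `l'`, and `0` elsewhere. -/
noncomputable def Nmat {R : Type} [CommRing R] {s : ℕ} (t : Fin s → R) :
    Matrix (rowPairs s) (Fin s) R :=
  fun p l => if l = p.val.1 then -t p.val.2 else if l = p.val.2 then t p.val.1 else 0

/-- The matrix `M_s(ν_1, …, ν_s, τ_1, …, τ_s)`: `N_s(τ_1, …, τ_s)` with `s` extra rows
appended, the `l`-th of which has `ν_l` in column `l` and `0` elsewhere. -/
noncomputable def Mmat {R : Type} [CommRing R] {s : ℕ} (ν t : Fin s → R) :
    Matrix (Fin s ⊕ rowPairs s) (Fin s) R :=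
  Sum.elim (fun l l' => if l' = l then ν l else 0) (Nmat t)

/-- `I = I_1 × ⋯ × I_s` where `I_l` is the (possibly trivial) cyclic subgroup generated
by `σ l`: every element of `I` is, in a unique way, the product of elements of the
subgroups `⟨σ l⟩`. -/
def IsDecomp {G : Type} [CommGroup G] (I : Subgroup G) {s : ℕ} (σ : Fin s → G) : Prop :=
  (∀ l, σ l ∈ I) ∧
    ∀ g ∈ I, ∃! x : ∀ l, Subgroup.zpowers (σ l), (∏ l, ((x l : G))) = g

/-- The ideal `Z_i` generated by the products `ν_{l_1} ⋯ ν_{l_{s-i}}` over all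
`(s-i)`-element subsets `{l_1 < ⋯ < l_{s-i}}` of `{1, …, s}`. -/
noncomputable def Zideal {G : Type} [CommGroup G] [Fintype G] {s : ℕ} (σ : Fin s → G)
    (i : ℕ) : Ideal (MonoidAlgebra ℤ G) :=
  Ideal.span {x | ∃ T : Finset (Fin s), T.card = s - i ∧
    x = ∏ l ∈ T, nuElt ℤ (Subgroup.zpowers (σ l))}

/-- The augmentation-type kernel ideal `𝓘_H = ker(ℤ[G] → ℤ[G/H])`. -/
noncomputable def kerIdeal {G : Type} [CommGroup G] [Fintype G] (H : Subgroup G) :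
    Ideal (MonoidAlgebra ℤ G) :=
  RingHom.ker (MonoidAlgebra.mapDomainRingHom ℤ (QuotientGroup.mk' H))

theorem QuotientGroup.bijective_out_mul {G : Type*} [Group G] (H : Subgroup G) :
    Function.Bijective fun p : (G ⧸ H) × H => p.1.out * p.2 := by
  refine ⟨fun ⟨q, h⟩ ⟨q', h'⟩ he => ?_, fun g => ?_⟩
  · have hq : q = q' := by
      simpa [QuotientGroup.mk_mul_of_mem _ h.2, QuotientGroup.mk_mul_of_mem _ h'.2] using
        congrArg (QuotientGroup.mk : G → G ⧸ H) he
    subst hq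
    exact Prod.ext rfl (Subtype.ext (mul_left_cancel he))
  · exact ⟨(QuotientGroup.mk g, ⟨_, QuotientGroup.eq.mp (QuotientGroup.out_eq' _)⟩),
      mul_inv_cancel_left _ _⟩

namespace MonoidAlgebra

section

variable {R : Type*} [CommRing R]

theorem mapDomain_surjective {M N : Type*} {f : M → N} (hf : Function.Surjective f) :
    Function.Surjective (mapDomain (R := R) f) := by
  intro y
  obtain ⟨x, hx⟩ := Finsupp.mapDomain_surjective hf y.coeff
  exact ⟨ofCoeff x, by ext; simp [hx]⟩

theorem mapDomainRingHom_of {G G' : Type*} [Monoid G] [Monoid G'] (f : G →* G') (g : G) :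
    mapDomainRingHom R f (of R G g) = of R G' (f g) := by
  simp [of_apply]

theorem of_sub_one_mem_span_image_of_mem_closure {G : Type*} [Group G] {S : Set G} {g : G}
    (hg : g ∈ Subgroup.closure S) :
    of R G g - 1 ∈ Ideal.span ((fun s => of R G s - 1) '' S) := by
  induction hg using Subgroup.closure_induction with
  | mem x hx => exact Ideal.subset_span ⟨x, hx, rfl⟩
  | one => rw [map_one, sub_self]; exact zero_mem _
  | mul x y _ _ hx hy =>
    have : of R G (x * y) - 1 = of R G x * (of R G y - 1) + (of R G x - 1) := by
      rw [map_mul, mul_sub, mul_one, sub_add_sub_cancel]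
    rw [this]
    exact add_mem (Ideal.mul_mem_left _ _ hy) hx
  | inv x _ hx =>
    have : of R G x⁻¹ - 1 = -(of R G x⁻¹ * (of R G x - 1)) := by
      rw [mul_sub, ← map_mul, inv_mul_cancel, map_one, mul_one, neg_sub]
    rw [this]
    exact neg_mem (Ideal.mul_mem_left _ _ hx)

theorem span_image_closure {G : Type*} [Group G] (S : Set G) :
    Ideal.span ((fun g => of R G g - 1) '' Subgroup.closure S) =
      Ideal.span ((fun g => of R G g - 1) '' S) :=
  le_antisymm
    (Ideal.span_le.mpr <| Set.image_subset_iff.mpr fun _ hg =>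
      of_sub_one_mem_span_image_of_mem_closure hg)
    (Ideal.span_mono <| Set.image_mono Subgroup.subset_closure)

theorem ker_mapDomainRingHom_mk' {G : Type*} [CommGroup G] (H : Subgroup G) :
    RingHom.ker (mapDomainRingHom R (QuotientGroup.mk' H)) =
      Ideal.span ((fun h => of R G h - 1) '' H) := by
  set J := Ideal.span ((fun h => of R G h - 1) '' (H : Set G))
  -- `x` and its transport along a set-theoretic section of `G → G ⧸ H` agree modulo `J`
  have hsection (x : R[G]) :
      x - mapDomain Quotient.out (mapDomain (QuotientGroup.mk' H) x) ∈ J := by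
    induction x using induction_linear with
    | zero => simp
    | add x y hx hy => simpa [mapDomain_add, add_sub_add_comm] using add_mem hx hy
    | single g r =>
      obtain ⟨h, hh⟩ := QuotientGroup.mk_out_eq_mul H g
      have : single g r - single (g * h) r = -(single g r * (of R G h - 1)) := by
        rw [mul_sub, of_apply, single_mul_single, mul_one, mul_one, neg_sub]
      simpa [mapDomain_single, hh, this] using
        neg_mem (Ideal.mul_mem_left J (single g r) (Ideal.subset_span ⟨h, h.2, rfl⟩))
  ext x
  refine ⟨fun hx => ?_, fun hx => ?_⟩
  · rw [RingHom.mem_ker, mapDomainRingHom_apply] at hx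
    simpa only [hx, mapDomain_zero, sub_zero] using hsection x
  · refine (Ideal.span_le.mpr ?_) hx
    rintro _ ⟨h, hh, rfl⟩
    rw [SetLike.mem_coe, RingHom.mem_ker, map_sub, map_one, mapDomainRingHom_of,
      QuotientGroup.mk'_apply, (QuotientGroup.eq_one_iff h).mpr hh, map_one, sub_self]

end

section nuElt

variable {R : Type} [CommRing R] {G : Type} [CommGroup G] [Fintype G]

theorem nuElt_eq_sum (H : Subgroup G) [Fintype H] : nuElt R H = ∑ h : H, of R G h := by
  classical
  rw [nuElt]
  exact Finset.sum_subtype _ (by simp) _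

theorem nuElt_mul_of_of_mem {H : Subgroup G} {h : G} (hh : h ∈ H) :
    nuElt R H * of R G h = nuElt R H := by
  classical
  simp only [nuElt_eq_sum, Finset.sum_mul, ← map_mul]
  exact Equiv.sum_comp (Equiv.mulRight (⟨h, hh⟩ : H)) fun h' => of R G h'

theorem mem_span_nuElt_of_forall_mul_of {H : Subgroup G} {x : R[G]}
    (hx : ∀ h ∈ H, x * of R G h = x) : x ∈ Ideal.span {nuElt R H} := by
  classical
  have hcoeff (g : G) (h : H) : x.coeff (g * h) = x.coeff g := by
    have := coeff_mul_single_apply x 1 (h : G) (g * h)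
    rwa [← of_apply, hx h h.2, mul_inv_cancel_right, mul_one] at this
  refine Ideal.mem_span_singleton'.mpr ⟨∑ q : G ⧸ H, single q.out (x.coeff q.out), ?_⟩
  calc (∑ q : G ⧸ H, single q.out (x.coeff q.out)) * nuElt R H
      = ∑ p : (G ⧸ H) × H, single (p.1.out * p.2) (x.coeff (p.1.out * p.2)) := by
        simp only [nuElt_eq_sum, Finset.sum_mul_sum, Fintype.sum_prod_type, of_apply,
          single_mul_single, mul_one, hcoeff]
    _ = ∑ g : G, single g (x.coeff g) :=
        Fintype.sum_bijective _ (QuotientGroup.bijective_out_mul H) _ _ fun _ => rfl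
    _ = x := by
        conv_rhs => rw [← sum_coeff_single x, Finsupp.sum_fintype _ _ (by simp)]

theorem nuElt_mul_of_sub_one (σ : G) : nuElt R (Subgroup.zpowers σ) * (of R G σ - 1) = 0 := by
  rw [mul_sub, mul_one, nuElt_mul_of_of_mem (Subgroup.mem_zpowers σ), sub_self]

theorem mul_of_sub_one_eq_zero_iff {σ : G} {x : R[G]} :
    x * (of R G σ - 1) = 0 ↔ x ∈ Ideal.span {nuElt R (Subgroup.zpowers σ)} := by
  refine ⟨fun hx => mem_span_nuElt_of_forall_mul_of fun h hh => ?_, fun hx => ?_⟩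
  · obtain ⟨n, rfl⟩ := (mem_powers_iff_mem_zpowers (x := σ)).mpr hh
    clear hh
    rw [mul_sub, mul_one, sub_eq_zero] at hx
    dsimp only
    rw [map_pow]
    induction n with
    | zero => rw [pow_zero, mul_one]
    | succ n ih => rw [pow_succ, ← mul_assoc, ih, hx]
  · obtain ⟨a, rfl⟩ := Ideal.mem_span_singleton'.mp hx
    rw [mul_assoc, nuElt_mul_of_sub_one, mul_zero]

theorem mapDomainRingHom_nuElt {G' : Type} [CommGroup G'] [Fintype G'] (f : G →* G')
    {H : Subgroup G} (hf : Set.InjOn f H) :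
    mapDomainRingHom R f (nuElt R H) = nuElt R (H.map f) := by
  classical
  simp only [nuElt, map_sum, mapDomainRingHom_of]
  rw [← Finset.sum_image (f := fun g' => of R G' g')
    fun a ha b hb => hf (by simpa using ha) (by simpa using hb)]
  congr 1
  ext g'
  simp

end nuElt

end MonoidAlgebra

section PresentationMatrix

variable {R R' : Type} [CommRing R] [CommRing R'] {s : ℕ}

theorem Mmat_inl (ν τ : Fin s → R) (l : Fin s) : Mmat ν τ (Sum.inl l) = Pi.single l (ν l) := by
  ext l'
  rw [Pi.single_apply]
  rfl

theorem Mmat_inr (ν τ : Fin s → R) (p : rowPairs s) :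
    Mmat ν τ (Sum.inr p) = Pi.single p.1.2 (τ p.1.1) - Pi.single p.1.1 (τ p.1.2) := by
  ext l
  have hne := p.2.ne
  change Nmat τ p l = _
  simp only [Nmat, Pi.sub_apply, Pi.single_apply]
  split_ifs <;> simp_all

theorem range_Mmat (ν τ : Fin s → R) :
    Set.range (Mmat ν τ) = Set.range (fun l => Pi.single l (ν l)) ∪
      {v | ∃ l l' : Fin s, l < l' ∧ v = Pi.single l' (τ l) - Pi.single l (τ l')} := by
  ext v
  constructor
  · rintro ⟨l | p, rfl⟩
    exacts [Or.inl ⟨l, (Mmat_inl ν τ l).symm⟩, Or.inr ⟨p.1.1, p.1.2, p.2, Mmat_inr ν τ p⟩]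
  · rintro (⟨l, rfl⟩ | ⟨l, l', hll', rfl⟩)
    exacts [⟨Sum.inl l, Mmat_inl ν τ l⟩, ⟨Sum.inr ⟨(l, l'), hll'⟩, Mmat_inr ν τ _⟩]

theorem span_range_Mmat_le_ker {ν τ : Fin s → R} (hντ : ∀ l, ν l * τ l = 0) :
    Submodule.span R (Set.range (Mmat ν τ)) ≤ LinearMap.ker (Fintype.linearCombination R τ) := by
  rw [Submodule.span_le]
  rintro _ ⟨l | p, rfl⟩ <;>
    simp [Mmat_inl, Mmat_inr, Fintype.linearCombination_apply, Pi.single_apply, hντ, mul_comm,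
      Finset.sum_sub_distrib, mul_sub]

theorem mem_span_range_Mmat_of_castSucc_mem {ν τ : Fin (s + 1) → R}
    (hann : ∀ y, y * τ (Fin.last s) = 0 → y ∈ Ideal.span {ν (Fin.last s)})
    {x : Fin (s + 1) → R} (hx : x ∈ LinearMap.ker (Fintype.linearCombination R τ))
    (hcast : ∀ l : Fin s, x l.castSucc ∈ Ideal.span {τ (Fin.last s)}) :
    x ∈ Submodule.span R (Set.range (Mmat ν τ)) := by
  choose a ha using fun l => Ideal.mem_span_singleton'.mp (hcast l)
  set c := x (Fin.last s) + ∑ l, a l * τ l.castSucc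
  have hc : c * τ (Fin.last s) = 0 := by
    rw [LinearMap.mem_ker, Fintype.linearCombination_apply, Fin.sum_univ_castSucc] at hx
    simp only [smul_eq_mul, ← ha] at hx
    rw [← hx, add_mul, Finset.sum_mul, add_comm]
    congr 1
    exact Finset.sum_congr rfl fun l _ => by ring
  obtain ⟨b, hb⟩ := Ideal.mem_span_singleton'.mp (hann c hc)
  -- subtracting the Koszul relations between each `l` and `last` leaves `c • e_last`
  have hdecomp : x = ∑ l : Fin s, (-a l) • Mmat ν τ (Sum.inr ⟨(l.castSucc, Fin.last s),
      Fin.castSucc_lt_last l⟩) + b • Mmat ν τ (Sum.inl (Fin.last s)) := by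
    ext i
    induction i using Fin.lastCases with
    | last =>
      simp [Mmat_inl, Mmat_inr, Finset.sum_apply, hb, c, (Fin.castSucc_lt_last _).ne]
    | cast i =>
      simp [Mmat_inl, Mmat_inr, Finset.sum_apply, Pi.single_apply, ← ha,
        (Fin.castSucc_lt_last _).ne]
  rw [hdecomp]
  exact add_mem (Submodule.sum_mem _ fun l _ => Submodule.smul_mem _ _ (Submodule.subset_span
    (Set.mem_range_self _))) (Submodule.smul_mem _ _ (Submodule.subset_span (Set.mem_range_self _)))

theorem exists_lift_of_mem_span_range_Mmat (π : R →+* R') (hπ : Function.Surjective π)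
    {ν τ : Fin (s + 1) → R} {y : Fin s → R'}
    (hy : y ∈ Submodule.span R'
      (Set.range (Mmat (fun l => π (ν l.castSucc)) (fun l => π (τ l.castSucc))))) :
    ∃ w ∈ Submodule.span R (Set.range (Mmat ν τ)), ∀ l, π (w l.castSucc) = y l := by
  have : RingHomSurjective π := ⟨hπ⟩
  let restrict : (Fin (s + 1) → R) →ₛₗ[π] (Fin s → R') :=
    { toFun := fun w l => π (w l.castSucc)
      map_add' := fun _ _ => funext fun _ => map_add π _ _
      map_smul' := fun _ _ => funext fun _ => map_mul π _ _ }
  have hsingle (l : Fin s) (r : R) :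
      restrict (Pi.single l.castSucc r) = Pi.single l (π r) := by
    ext m
    simp [restrict, Pi.single_apply, Fin.castSucc_inj, apply_ite π]
  suffices y ∈ (Submodule.span R (Set.range (Mmat ν τ))).map restrict by
    obtain ⟨w, hw, rfl⟩ := this
    exact ⟨w, hw, fun _ => rfl⟩
  rw [Submodule.map_span]
  refine Submodule.span_mono ?_ hy
  rintro _ ⟨l | p, rfl⟩
  · exact ⟨_, Set.mem_range_self (Sum.inl l.castSucc), by
      rw [Mmat_inl, Mmat_inl, hsingle]⟩
  · exact ⟨_, Set.mem_range_self (Sum.inr ⟨(p.1.1.castSucc, p.1.2.castSucc),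
      Fin.castSucc_lt_castSucc_iff.mpr p.2⟩), by
      rw [Mmat_inr, Mmat_inr, map_sub, hsingle, hsingle]⟩

theorem ker_le_span_range_Mmat_of_quotient (π : R →+* R') (hπ : Function.Surjective π)
    {ν τ : Fin (s + 1) → R} (hντ : ∀ l, ν l * τ l = 0)
    (hker : RingHom.ker π = Ideal.span {τ (Fin.last s)})
    (hann : ∀ y, y * τ (Fin.last s) = 0 → y ∈ Ideal.span {ν (Fin.last s)})
    (hquot : LinearMap.ker (Fintype.linearCombination R' fun l => π (τ l.castSucc)) ≤
      Submodule.span R'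
        (Set.range (Mmat (fun l => π (ν l.castSucc)) (fun l => π (τ l.castSucc))))) :
    LinearMap.ker (Fintype.linearCombination R τ) ≤ Submodule.span R (Set.range (Mmat ν τ)) := by
  intro x hx
  have hτlast : π (τ (Fin.last s)) = 0 := by
    rw [← RingHom.mem_ker, hker]
    exact Ideal.mem_span_singleton_self _
  have hπx : (fun l : Fin s => π (x l.castSucc)) ∈
      LinearMap.ker (Fintype.linearCombination R' fun l => π (τ l.castSucc)) := by
    rw [LinearMap.mem_ker, Fintype.linearCombination_apply, Fin.sum_univ_castSucc] at hx
    rw [LinearMap.mem_ker, Fintype.linearCombination_apply]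
    simpa [hτlast] using congrArg π hx
  obtain ⟨w, hw, hwx⟩ := exists_lift_of_mem_span_range_Mmat π hπ (hquot hπx)
  have hu : x - w ∈ Submodule.span R (Set.range (Mmat ν τ)) := by
    refine mem_span_range_Mmat_of_castSucc_mem hann (sub_mem hx (span_range_Mmat_le_ker hντ hw))
      fun l => ?_
    rw [← hker, RingHom.mem_ker, Pi.sub_apply, map_sub, hwx, sub_self]
  simpa using add_mem hw hu

end PresentationMatrix

section Independence

def ZPowIndep {G ι : Type*} [CommGroup G] [Fintype ι] (σ : ι → G) : Prop :=
  ∀ k : ι → ℤ, ∏ l, σ l ^ k l = 1 → ∀ l, σ l ^ k l = 1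

variable {G : Type*} [CommGroup G] {s : ℕ}

theorem ZPowIndep.inf_zpowers_eq_bot {ι : Type*} [Fintype ι] {σ : ι → G}
    (hσ : ZPowIndep σ) {l m : ι} (hlm : l ≠ m) :
    Subgroup.zpowers (σ l) ⊓ Subgroup.zpowers (σ m) = ⊥ := by
  classical
  rw [Subgroup.eq_bot_iff_forall]
  rintro _ ⟨⟨a, rfl⟩, ⟨b, hb⟩⟩
  dsimp only at hb ⊢
  have := hσ (fun i => if i = l then a else if i = m then -b else 0)
    (by rw [Fintype.prod_eq_mul l m hlm (by intro i hi; simp [hi.1, hi.2])]; simp [hlm.symm, hb])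
    l
  simpa using this

theorem ZPowIndep.quotient {σ : Fin (s + 1) → G} (hσ : ZPowIndep σ) :
    ZPowIndep fun l : Fin s => (σ l.castSucc : G ⧸ Subgroup.zpowers (σ (Fin.last s))) := by
  intro k hk l
  simp_rw [← QuotientGroup.mk_zpow, ← QuotientGroup.mk_prod, QuotientGroup.eq_one_iff] at hk
  obtain ⟨m, hm⟩ := hk
  have := hσ (Fin.snoc k (-m)) (by simp [Fin.prod_univ_castSucc, ← hm]) l.castSucc
  rw [Fin.snoc_castSucc] at this
  rw [← QuotientGroup.mk_zpow, this, QuotientGroup.mk_one]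

theorem ZPowIndep.injOn_mk' {σ : Fin (s + 1) → G} (hσ : ZPowIndep σ) (l : Fin s) :
    Set.InjOn (QuotientGroup.mk' (Subgroup.zpowers (σ (Fin.last s))))
      (Subgroup.zpowers (σ l.castSucc)) := by
  intro a ha b hb hab
  have hmem : a⁻¹ * b ∈ Subgroup.zpowers (σ l.castSucc) ⊓ Subgroup.zpowers (σ (Fin.last s)) :=
    ⟨Subgroup.mul_mem _ (Subgroup.inv_mem _ ha) hb, QuotientGroup.eq.mp hab⟩
  rw [hσ.inf_zpowers_eq_bot (Fin.castSucc_lt_last l).ne, Subgroup.mem_bot] at hmem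
  exact inv_mul_eq_one.mp hmem

end Independence

theorem IsDecomp.zpowIndep {G : Type} [CommGroup G] {I : Subgroup G} {s : ℕ} {σ : Fin s → G}
    (hdec : IsDecomp I σ) : ZPowIndep σ := by
  intro k hk l
  obtain ⟨_, _, huniq⟩ := hdec.2 1 I.one_mem
  have := (huniq (fun l => ⟨σ l ^ k l, Subgroup.zpow_mem_zpowers _ _⟩) hk).trans
    (huniq 1 (by simp)).symm
  simpa using congrArg (fun x => (x l : G)) this

theorem IsDecomp.eq_closure_range {G : Type} [CommGroup G] {I : Subgroup G} {s : ℕ}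
    {σ : Fin s → G} (hdec : IsDecomp I σ) : I = Subgroup.closure (Set.range σ) := by
  refine le_antisymm (fun g hg => ?_)
    ((Subgroup.closure_le I).mpr (Set.range_subset_iff.mpr hdec.1))
  obtain ⟨x, hx, -⟩ := hdec.2 g hg
  rw [← hx]
  exact Subgroup.prod_mem _ fun l _ =>
    Subgroup.zpowers_le.mpr (Subgroup.subset_closure (Set.mem_range_self l)) (x l).2

theorem ker_linearCombination_le_span_range_Mmat {R : Type} [CommRing R] :
    ∀ {s : ℕ} {G : Type} [CommGroup G] [Fintype G] (σ : Fin s → G), ZPowIndep σ →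
      LinearMap.ker (Fintype.linearCombination R[G] fun l => of R G (σ l) - 1) ≤
        Submodule.span R[G] (Set.range (Mmat
          (fun l => nuElt R (Subgroup.zpowers (σ l))) (fun l => of R G (σ l) - 1)))
  | 0, _, _, _, _, _ => fun x _ => by rw [Subsingleton.elim x 0]; exact zero_mem _
  | s + 1, G, _, _, σ, hσ => by
    classical
    let K := Subgroup.zpowers (σ (Fin.last s))
    let π := mapDomainRingHom R (QuotientGroup.mk' K)
    refine ker_le_span_range_Mmat_of_quotient π
      (mapDomain_surjective (QuotientGroup.mk'_surjective K))
      (fun l => nuElt_mul_of_sub_one (σ l)) ?_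
      (fun y => mul_of_sub_one_eq_zero_iff.mp) ?_
    · rw [ker_mapDomainRingHom_mk', show K = Subgroup.closure {σ (Fin.last s)} from
        Subgroup.zpowers_eq_closure _, span_image_closure, Set.image_singleton]
    · have hτ : (fun l : Fin s => π (of R G (σ l.castSucc) - 1)) =
          fun l => of R (G ⧸ K) (σ l.castSucc) - 1 := by
        ext1 l
        rw [map_sub, map_one, mapDomainRingHom_of, QuotientGroup.mk'_apply]
      have hν : (fun l : Fin s => π (nuElt R (Subgroup.zpowers (σ l.castSucc)))) =
          fun l => nuElt R (Subgroup.zpowers (σ l.castSucc : G ⧸ K)) := by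
        ext1 l
        rw [mapDomainRingHom_nuElt _ (hσ.injOn_mk' l), MonoidHom.map_zpowers,
          QuotientGroup.mk'_apply]
      rw [hτ, hν]
      exact ker_linearCombination_le_span_range_Mmat _ hσ.quotient

theorem ker_linearCombination_eq_span_range_Mmat {R G : Type} [CommRing R] [CommGroup G]
    [Fintype G] {s : ℕ} {σ : Fin s → G} (hσ : ZPowIndep σ) :
    LinearMap.ker (Fintype.linearCombination R[G] fun l => of R G (σ l) - 1) =
      Submodule.span R[G] (Set.range (Mmat
        (fun l => nuElt R (Subgroup.zpowers (σ l))) (fun l => of R G (σ l) - 1))) :=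
  le_antisymm (ker_linearCombination_le_span_range_Mmat σ hσ)
    (span_range_Mmat_le_ker fun l => nuElt_mul_of_sub_one (σ l))

theorem statement2 {G : Type} [CommGroup G] [Fintype G] (I : Subgroup G)
    {s : ℕ} (σ : Fin s → G) (hdec : IsDecomp I σ) :
    kerIdeal I = Ideal.span (Set.range fun l => MonoidAlgebra.of ℤ G (σ l) - 1) ∧
    ∀ x : Fin s → MonoidAlgebra ℤ G,
      (∑ l, x l * (MonoidAlgebra.of ℤ G (σ l) - 1) = 0) ↔
        x ∈ Submodule.span (MonoidAlgebra ℤ G)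
          ((Set.range fun l => Pi.single l (nuElt ℤ (Subgroup.zpowers (σ l)))) ∪
            {v | ∃ l l' : Fin s, l < l' ∧
              v = Pi.single l' (MonoidAlgebra.of ℤ G (σ l) - 1)
                - Pi.single l (MonoidAlgebra.of ℤ G (σ l') - 1)}) := by
  refine ⟨?_, fun x => ?_⟩
  · rw [kerIdeal, ker_mapDomainRingHom_mk', hdec.eq_closure_range, span_image_closure,
      ← Set.range_comp]
    rfl
  · rw [← range_Mmat, ← SetLike.mem_coe,
      ← ker_linearCombination_eq_span_range_Mmat hdec.zpowIndep, SetLike.mem_coe,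
      LinearMap.mem_ker, Fintype.linearCombination_apply]
    rfl
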